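/- arXiv:2510.13504 — 3 statements merged into one kernel-verified Lean document; each statement's English description precedes it below -/
import Mathlib

section
/- Let (A_i, B_i)_{i≥1} be an i.i.d. sequence of pairs of square-integrable real random variables distributed as (A, B), with pairs at distinct indices independent, and suppose Var(A) > 0 and Var(B) > 0. Let α_c = Cov(A, B)/Var(B) and, for n, m ≥ 1, let B̄_{n+m} = (1/(n+m))∑_{i=1}^{n+m} B_i. Then the approximate control variates estimator Â_ACV = Ā_n + α_c(B̄_{n+m} − B̄_n) satisfies Var(Â_ACV) = (1 − (m/(n+m)) Corr(A, B)²) · Var(Ā_n), where Corr(A, B) = Cov(A, B)/√(Var(A)Var(B)). -/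
open MeasureTheory ProbabilityTheory

/-- Covariance of two real random variables: `Cov(X, Y) = E[(X − E[X])(Y − E[Y])]`. -/
noncomputable def covar {Ω : Type*} [MeasurableSpace Ω] (μ : Measure Ω) (X Y : Ω → ℝ) : ℝ :=
  ∫ ω, (X ω - ∫ x, X x ∂μ) * (Y ω - ∫ x, Y x ∂μ) ∂μ

/-- Variance of a real random variable: `Var(X) = Cov(X, X)`. -/
noncomputable def Var {Ω : Type*} [MeasurableSpace Ω] (μ : Measure Ω) (X : Ω → ℝ) : ℝ :=
  covar μ X X

/-- Sample mean of the first `n` terms of a sequence of random variables. -/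
noncomputable def sampleMean {Ω : Type*} (X : ℕ → Ω → ℝ) (n : ℕ) (ω : Ω) : ℝ :=
  (n : ℝ)⁻¹ * ∑ i ∈ Finset.range n, X i ω

section AuxACV

variable {Ω : Type*} [MeasurableSpace Ω] {μ : Measure Ω} [IsProbabilityMeasure μ]

lemma integrable_mul_of_memL2 {f g : Ω → ℝ} (hf : MemLp f 2 μ) (hg : MemLp g 2 μ) :
    Integrable (fun ω => f ω * g ω) μ := by
  have h : MemLp (g • f) 1 μ := hf.smul (r := 1) hg
  have := h.integrable le_rfl
  have : Integrable (f * g) μ := by simpa [smul_eq_mul, mul_comm] using this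
  exact this

lemma Var_eq_variance {X : Ω → ℝ} (hX : MemLp X 2 μ) : Var μ X = variance X μ := by
  rw [variance_eq_integral hX.aestronglyMeasurable.aemeasurable]
  simp only [Var, covar, Pi.pow_apply, Pi.sub_apply, pow_two]

lemma Var_congr_ident {X Y : Ω → ℝ} (h : IdentDistrib X Y μ μ) : Var μ X = Var μ Y := by
  unfold Var covar
  rw [h.integral_eq]
  exact (h.comp ((measurable_id.sub_const _).mul (measurable_id.sub_const _))).integral_eq

lemma var_combo {X Y : Ω → ℝ} (hX : MemLp X 2 μ) (hY : MemLp Y 2 μ) (a b : ℝ) :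
    Var μ (fun ω => a * X ω + b * Y ω)
      = a ^ 2 * Var μ X + 2 * a * b * covar μ X Y + b ^ 2 * Var μ Y := by
  have hXi : Integrable X μ := hX.integrable one_le_two
  have hYi : Integrable Y μ := hY.integrable one_le_two
  set EX := ∫ x, X x ∂μ with hEX
  set EY := ∫ x, Y x ∂μ with hEY
  have hEZ : ∫ x, (a * X x + b * Y x) ∂μ = a * EX + b * EY := by
    rw [integral_add (hXi.const_mul a) (hYi.const_mul b), integral_const_mul, integral_const_mul]
  have hX' : MemLp (fun ω => X ω - EX) 2 μ := hX.sub (memLp_const EX)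
  have hY' : MemLp (fun ω => Y ω - EY) 2 μ := hY.sub (memLp_const EY)
  unfold Var covar
  rw [hEZ]
  have key : (fun ω => (a * X ω + b * Y ω - (a * EX + b * EY)) *
        (a * X ω + b * Y ω - (a * EX + b * EY)))
      = fun ω => a ^ 2 * ((X ω - EX) * (X ω - EX))
          + (2 * a * b * ((X ω - EX) * (Y ω - EY))
          + b ^ 2 * ((Y ω - EY) * (Y ω - EY))) := by
    funext ω; ring
  rw [key, integral_add, integral_add, integral_const_mul, integral_const_mul,
    integral_const_mul]
  · rw [← hEX, ← hEY]; ring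
  · exact (integrable_mul_of_memL2 hX' hY').const_mul _
  · exact (integrable_mul_of_memL2 hY' hY').const_mul _
  · exact (integrable_mul_of_memL2 hX' hX').const_mul _
  · exact ((integrable_mul_of_memL2 hX' hY').const_mul _).add
      ((integrable_mul_of_memL2 hY' hY').const_mul _)

lemma var_sum_combo {A B : ℕ → Ω → ℝ} {A₀ B₀ : Ω → ℝ}
    (hA₀ : MemLp A₀ 2 μ) (hB₀ : MemLp B₀ 2 μ)
    (hident : ∀ i, IdentDistrib (fun ω => (A i ω, B i ω)) (fun ω => (A₀ ω, B₀ ω)) μ μ)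
    (hindep : iIndepFun (m := fun _ : ℕ => (inferInstance : MeasurableSpace (ℝ × ℝ)))
      (fun i ω => (A i ω, B i ω)) μ)
    (N : ℕ) (a b : ℕ → ℝ) :
    Var μ (fun ω => ∑ i ∈ Finset.range N, (a i * A i ω + b i * B i ω))
      = ∑ i ∈ Finset.range N,
          ((a i) ^ 2 * Var μ A₀ + 2 * (a i) * (b i) * covar μ A₀ B₀
            + (b i) ^ 2 * Var μ B₀) := by
  set Y : ℕ → Ω → ℝ := fun i ω => a i * A i ω + b i * B i ω with hY
  have hg : ∀ i, Measurable (fun p : ℝ × ℝ => a i * p.1 + b i * p.2) := by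
    intro i; fun_prop
  have hYid : ∀ i, IdentDistrib (Y i) (fun ω => a i * A₀ ω + b i * B₀ ω) μ μ :=
    fun i => (hident i).comp (hg i)
  have hcombo : ∀ i, MemLp (fun ω => a i * A₀ ω + b i * B₀ ω) 2 μ :=
    fun i => (hA₀.const_mul (a i)).add (hB₀.const_mul (b i))
  have hYm : ∀ i, MemLp (Y i) 2 μ := fun i => (hYid i).symm.memLp_snd (hcombo i)
  have hYindep : iIndepFun (m := fun _ : ℕ => (inferInstance : MeasurableSpace ℝ)) Y μ :=
    hindep.comp _ hg
  have h1 : (fun ω => ∑ i ∈ Finset.range N, (a i * A i ω + b i * B i ω))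
      = ∑ i ∈ Finset.range N, Y i := by
    funext ω; rw [Finset.sum_apply]
  rw [h1, Var_eq_variance (memLp_finset_sum' _ fun i _ => hYm i),
    IndepFun.variance_sum (fun i _ => hYm i)
      (fun i _ j _ hij => hYindep.indepFun hij)]
  refine Finset.sum_congr rfl fun i _ => ?_
  rw [(hYid i).variance_eq, ← Var_eq_variance (hcombo i), var_combo hA₀ hB₀]

end AuxACV

/-- Variance of the approximate control variates estimator with the classical coefficient:
`Var(Â_ACV) = (1 − (m/(n+m))·Corr(A, B)²)·Var(Ā_n)`. -/
theorem var_acv_estimator {Ω : Type*} [MeasurableSpace Ω] (μ : Measure Ω)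
    [IsProbabilityMeasure μ]
    (A B : ℕ → Ω → ℝ) (A₀ B₀ : Ω → ℝ)
    (hA₀ : MemLp A₀ 2 μ) (hB₀ : MemLp B₀ 2 μ)
    (hident : ∀ i, IdentDistrib (fun ω => (A i ω, B i ω)) (fun ω => (A₀ ω, B₀ ω)) μ μ)
    (hindep : iIndepFun (m := fun _ : ℕ => (inferInstance : MeasurableSpace (ℝ × ℝ)))
      (fun i ω => (A i ω, B i ω)) μ)
    (hVarA : 0 < Var μ A₀) (hVarB : 0 < Var μ B₀)
    (n m : ℕ) (hn : 1 ≤ n) (hm : 1 ≤ m) :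
    Var μ (fun ω => sampleMean A n ω
        + (covar μ A₀ B₀ / Var μ B₀) * (sampleMean B (n + m) ω - sampleMean B n ω))
      = (1 - ((m : ℝ) / ((n : ℝ) + (m : ℝ)))
            * (covar μ A₀ B₀ / Real.sqrt (Var μ A₀ * Var μ B₀)) ^ 2)
        * Var μ (sampleMean A n) := by
  classical
  set C := covar μ A₀ B₀ with hC
  set VA := Var μ A₀ with hVA
  set VB := Var μ B₀ with hVB
  set α : ℝ := C / VB with hα
  have hsplit : ∀ f : ℕ → ℝ, ∑ i ∈ Finset.range (n + m), f i
      = ∑ i ∈ Finset.range n, f i + ∑ i ∈ Finset.Ico n (n + m), f i := by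
    intro f
    rw [Finset.range_eq_Ico,
      ← Finset.sum_Ico_consecutive _ (Nat.zero_le n) (Nat.le_add_right n m),
      ← Finset.range_eq_Ico]
  set a : ℕ → ℝ := fun i => if i < n then (n : ℝ)⁻¹ else 0 with ha
  set b : ℕ → ℝ := fun i =>
    if i < n then α * (((n + m : ℕ) : ℝ)⁻¹ - (n : ℝ)⁻¹) else α * ((n + m : ℕ) : ℝ)⁻¹ with hb
  have hfun : (fun ω => sampleMean A n ω + α * (sampleMean B (n + m) ω - sampleMean B n ω))
      = fun ω => ∑ i ∈ Finset.range (n + m), (a i * A i ω + b i * B i ω) := by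
    funext ω
    have h1 : ∑ i ∈ Finset.range (n + m), (a i * A i ω + b i * B i ω)
        = ∑ i ∈ Finset.range n,
            ((n : ℝ)⁻¹ * A i ω + (α * (((n + m : ℕ) : ℝ)⁻¹ - (n : ℝ)⁻¹)) * B i ω)
          + ∑ i ∈ Finset.Ico n (n + m), (α * ((n + m : ℕ) : ℝ)⁻¹) * B i ω := by
      rw [hsplit]
      congr 1
      · exact Finset.sum_congr rfl fun i hi => by
          simp [ha, hb, Finset.mem_range.mp hi]
      · refine Finset.sum_congr rfl fun i hi => ?_
        have hni : ¬ i < n := by have := (Finset.mem_Ico.mp hi).1; omega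
        simp [ha, hb, hni]
    rw [h1]
    simp only [sampleMean, Finset.sum_add_distrib, ← Finset.mul_sum]
    rw [hsplit (fun i => B i ω)]
    ring
  have hsm : sampleMean A n = fun ω => ∑ i ∈ Finset.range n, ((n : ℝ)⁻¹ * A i ω + 0 * B i ω) := by
    funext ω; simp [sampleMean, Finset.mul_sum]
  rw [hfun, var_sum_combo hA₀ hB₀ hident hindep, hsm,
    var_sum_combo hA₀ hB₀ hident hindep]
  rw [hsplit (fun i => (a i) ^ 2 * VA + 2 * (a i) * (b i) * C + (b i) ^ 2 * VB)]
  have hone : (∑ i ∈ Finset.range n, ((a i) ^ 2 * VA + 2 * (a i) * (b i) * C + (b i) ^ 2 * VB))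
      = (n : ℝ) * (((n : ℝ)⁻¹) ^ 2 * VA
          + 2 * (n : ℝ)⁻¹ * (α * (((n + m : ℕ) : ℝ)⁻¹ - (n : ℝ)⁻¹)) * C
          + (α * (((n + m : ℕ) : ℝ)⁻¹ - (n : ℝ)⁻¹)) ^ 2 * VB) := by
    calc (∑ i ∈ Finset.range n, ((a i) ^ 2 * VA + 2 * (a i) * (b i) * C + (b i) ^ 2 * VB))
        = ∑ _i ∈ Finset.range n, (((n : ℝ)⁻¹) ^ 2 * VA
            + 2 * (n : ℝ)⁻¹ * (α * (((n + m : ℕ) : ℝ)⁻¹ - (n : ℝ)⁻¹)) * C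
            + (α * (((n + m : ℕ) : ℝ)⁻¹ - (n : ℝ)⁻¹)) ^ 2 * VB) :=
          Finset.sum_congr rfl fun i hi => by
            simp only [ha, hb, if_pos (Finset.mem_range.mp hi)]
      _ = _ := by rw [Finset.sum_const, Finset.card_range, nsmul_eq_mul]
  have htwo : (∑ i ∈ Finset.Ico n (n + m), ((a i) ^ 2 * VA + 2 * (a i) * (b i) * C + (b i) ^ 2 * VB))
      = (m : ℝ) * ((α * ((n + m : ℕ) : ℝ)⁻¹) ^ 2 * VB) := by
    calc (∑ i ∈ Finset.Ico n (n + m), ((a i) ^ 2 * VA + 2 * (a i) * (b i) * C + (b i) ^ 2 * VB))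
        = ∑ _i ∈ Finset.Ico n (n + m), ((α * ((n + m : ℕ) : ℝ)⁻¹) ^ 2 * VB) :=
          Finset.sum_congr rfl fun i hi => by
            have hni : ¬ i < n := by have := (Finset.mem_Ico.mp hi).1; omega
            simp only [ha, hb, if_neg hni]; ring
      _ = _ := by
          rw [Finset.sum_const, Nat.card_Ico, nsmul_eq_mul]
          congr 1
          push_cast [Nat.add_sub_cancel_left]
          ring
  have hthree : (∑ i ∈ Finset.range n, (((n : ℝ)⁻¹) ^ 2 * VA + 2 * ((n : ℝ)⁻¹) * 0 * C + 0 ^ 2 * VB))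
      = (n : ℝ) * (((n : ℝ)⁻¹) ^ 2 * VA + 2 * ((n : ℝ)⁻¹) * 0 * C + 0 ^ 2 * VB) := by
    rw [Finset.sum_const, Finset.card_range, nsmul_eq_mul]
  rw [hone, htwo, hthree]
  have hn0 : (n : ℝ) ≠ 0 := Nat.cast_ne_zero.mpr (by omega)
  have hnm : (0:ℝ) < (n : ℝ) + (m : ℝ) := by
    have h1 : (0:ℝ) < n := by exact_mod_cast hn
    have h2 : (0:ℝ) ≤ m := Nat.cast_nonneg m
    linarith
  have hN0 : (n : ℝ) + (m : ℝ) ≠ 0 := ne_of_gt hnm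
  rw [div_pow, Real.sq_sqrt (mul_nonneg hVarA.le hVarB.le)]
  push_cast
  simp only [nsmul_eq_mul, hα]
  field_simp
  ring
end

section
/- Let A, B, C, D be square-integrable real random variables on a probability space with E[C] ≠ 0 and E[A] ≠ 0, set R = E[A]/E[C], and suppose Cov(B, D)² < Var(B) · Var(D). Define f : ℝ² → ℝ by f(α, β) = Var(A) + α²Var(B) − 2α Cov(A, B) + R²Var(C) + β²R²Var(D) − 2βR² Cov(C, D) − 2R Cov(A, C) + 2αR Cov(B, C) + 2βR Cov(A, D) − 2αβR Cov(B, D). Then f has a unique global minimizer (α_o, β_o), given by α_o = (Var(D)Cov(A, B) − R Var(D)Cov(B, C) + R Cov(B, D)Cov(C, D) − Cov(B, D)Cov(A, D)) / (Var(B)Var(D) − Cov(B, D)²) and β_o = (Cov(B, D)Cov(A, B) − R Cov(B, D)Cov(B, C) + R Var(B)Cov(C, D) − Var(B)Cov(A, D)) / (R (Var(B)Var(D) − Cov(B, D)²)). -/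
open MeasureTheory ProbabilityTheory

/-- Under `Cov(B,D)² < Var(B)·Var(D)`, the CV/CV variance function has the unique global
minimizer `(α_o, β_o)` given by the optimal control variates coefficients. -/
theorem cv_cv_optimal_coefficients {Ω : Type*} [MeasurableSpace Ω]
    (μ : Measure Ω) [IsProbabilityMeasure μ]
    (A B C D : Ω → ℝ)
    (hA : MemLp A 2 μ) (hB : MemLp B 2 μ) (hC : MemLp C 2 μ) (hD : MemLp D 2 μ)
    (hEC : (∫ x, C x ∂μ) ≠ 0) (hEA : (∫ x, A x ∂μ) ≠ 0)
    (R : ℝ) (hR : R = (∫ x, A x ∂μ) / (∫ x, C x ∂μ))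
    (hBD : covar μ B D ^ 2 < Var μ B * Var μ D)
    (f : ℝ → ℝ → ℝ)
    (hf : ∀ α β : ℝ, f α β = Var μ A + α ^ 2 * Var μ B - 2 * α * covar μ A B
      + R ^ 2 * Var μ C + β ^ 2 * R ^ 2 * Var μ D - 2 * β * R ^ 2 * covar μ C D
      - 2 * R * covar μ A C + 2 * α * R * covar μ B C + 2 * β * R * covar μ A D
      - 2 * α * β * R * covar μ B D)
    (αo βo : ℝ)
    (hαo : αo = (Var μ D * covar μ A B - R * Var μ D * covar μ B C
      + R * covar μ B D * covar μ C D - covar μ B D * covar μ A D)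
      / (Var μ B * Var μ D - covar μ B D ^ 2))
    (hβo : βo = (covar μ B D * covar μ A B - R * covar μ B D * covar μ B C
      + R * Var μ B * covar μ C D - Var μ B * covar μ A D)
      / (R * (Var μ B * Var μ D - covar μ B D ^ 2))) :
    ∀ α β : ℝ, (α, β) ≠ (αo, βo) → f αo βo < f α β := by
  intro α β hne
  have hVb : 0 ≤ Var μ B := integral_nonneg (fun ω => mul_self_nonneg _)
  have hVd : 0 ≤ Var μ D := integral_nonneg (fun ω => mul_self_nonneg _)
  have hΔ : 0 < Var μ B * Var μ D - covar μ B D ^ 2 := by linarith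
  have hVbpos : 0 < Var μ B := by nlinarith [sq_nonneg (covar μ B D)]
  have hR0 : R ≠ 0 := by rw [hR]; exact div_ne_zero hEA hEC
  have hΔ' : Var μ B * Var μ D - covar μ B D ^ 2 ≠ 0 := ne_of_gt hΔ
  have hRΔ : R * (Var μ B * Var μ D - covar μ B D ^ 2) ≠ 0 := mul_ne_zero hR0 hΔ'
  have hid : f α β - f αo βo = Var μ B * (α - αo) ^ 2
      - 2 * R * covar μ B D * (α - αo) * (β - βo)
      + R ^ 2 * Var μ D * (β - βo) ^ 2 := by
    rw [hf, hf, hαo, hβo]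
    field_simp
    ring
  have hpos : 0 < Var μ B * (α - αo) ^ 2
      - 2 * R * covar μ B D * (α - αo) * (β - βo)
      + R ^ 2 * Var μ D * (β - βo) ^ 2 := by
    by_cases hb : β = βo
    · subst hb
      have ha : α ≠ αo := fun h => hne (by rw [h])
      have ha' : α - αo ≠ 0 := sub_ne_zero.mpr ha
      have h1 : 0 < (α - αo) ^ 2 := by positivity
      nlinarith [mul_pos hVbpos h1]
    · have hv : β - βo ≠ 0 := sub_ne_zero.mpr hb
      have hR2 : 0 < R ^ 2 := by positivity
      have hv2 : 0 < (β - βo) ^ 2 := by positivity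
      nlinarith [sq_nonneg (Var μ B * (α - αo) - R * covar μ B D * (β - βo)),
        mul_pos hΔ (mul_pos hR2 hv2)]
  linarith [hid, hpos]
end

section
/- Let A, C, D be square-integrable real random variables on a probability space with E[C] ≠ 0 and E[A] ≠ 0, set R = E[A]/E[C], suppose Var(D) > 0, and let a ≠ 0 and b be real numbers with B = aD + b (almost surely). Define f : ℝ² → ℝ by f(α, β) = Var(A) + α²Var(B) − 2α Cov(A, B) + R²Var(C) + β²R²Var(D) − 2βR² Cov(C, D) − 2R Cov(A, C) + 2αR Cov(B, C) + 2βR Cov(A, D) − 2αβR Cov(B, D). Then (α, β) ∈ ℝ² is a global minimizer of f if and only if aα − βR = (Cov(A, D) − R Cov(C, D))/Var(D); in particular f has infinitely many minimizers, one for each choice of β ∈ ℝ, given by α = (1/a)((Cov(A, D) − R Cov(C, D))/Var(D) + βR). -/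
open MeasureTheory ProbabilityTheory

/-- When the control variates are linearly correlated, `B = aD + b` a.s. with `a ≠ 0`,
`(α, β)` minimizes the CV/CV variance function iff
`aα − βR = (Cov(A,D) − RCov(C,D))/Var(D)`; in particular there are infinitely many
minimizers, one for each `β ∈ ℝ`. -/
theorem cv_cv_linearly_correlated_controls {Ω : Type*} [MeasurableSpace Ω]
    (μ : Measure Ω) [IsProbabilityMeasure μ]
    (A B C D : Ω → ℝ)
    (hA : MemLp A 2 μ) (hC : MemLp C 2 μ) (hD : MemLp D 2 μ)
    (hEC : (∫ x, C x ∂μ) ≠ 0) (hEA : (∫ x, A x ∂μ) ≠ 0)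
    (R : ℝ) (hR : R = (∫ x, A x ∂μ) / (∫ x, C x ∂μ))
    (hVarD : 0 < Var μ D)
    (a b : ℝ) (ha : a ≠ 0) (hBaD : ∀ᵐ ω ∂μ, B ω = a * D ω + b)
    (f : ℝ → ℝ → ℝ)
    (hf : ∀ α β : ℝ, f α β = Var μ A + α ^ 2 * Var μ B - 2 * α * covar μ A B
      + R ^ 2 * Var μ C + β ^ 2 * R ^ 2 * Var μ D - 2 * β * R ^ 2 * covar μ C D
      - 2 * R * covar μ A C + 2 * α * R * covar μ B C + 2 * β * R * covar μ A D
      - 2 * α * β * R * covar μ B D) :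
    (∀ α β : ℝ,
        (∀ α' β' : ℝ, f α β ≤ f α' β')
        ↔ a * α - β * R = (covar μ A D - R * covar μ C D) / Var μ D)
      ∧ (∀ β : ℝ, ∀ α' β' : ℝ,
          f ((1 / a) * ((covar μ A D - R * covar μ C D) / Var μ D + β * R)) β ≤ f α' β')
      ∧ {p : ℝ × ℝ | ∀ α' β' : ℝ, f p.1 p.2 ≤ f α' β'}.Infinite := by
 classical
  have hDint : Integrable D μ := hD.integrable one_le_two
  have hEB : (∫ x, B x ∂μ) = a * (∫ x, D x ∂μ) + b := by
    rw [integral_congr_ae hBaD, integral_add (hDint.const_mul a) (integrable_const b),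
      integral_const_mul]
    simp
  have hBD : ∀ᵐ ω ∂μ, B ω - (∫ x, B x ∂μ) = a * (D ω - ∫ x, D x ∂μ) := by
    filter_upwards [hBaD] with ω h
    rw [h, hEB]; ring
  have covL : ∀ X : Ω → ℝ, covar μ X B = a * covar μ X D := by
    intro X
    unfold covar
    rw [← integral_const_mul]
    refine integral_congr_ae ?_
    filter_upwards [hBD] with ω h
    rw [h]; ring
  have covR : ∀ X : Ω → ℝ, covar μ B X = a * covar μ D X := by
    intro X
    unfold covar
    rw [← integral_const_mul]
    refine integral_congr_ae ?_
    filter_upwards [hBD] with ω h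
    rw [h]; ring
  have varB : Var μ B = a ^ 2 * covar μ D D := by
    unfold Var covar
    rw [← integral_const_mul]
    refine integral_congr_ae ?_
    filter_upwards [hBD] with ω h
    rw [h]; ring
  have covsymm : ∀ X Y : Ω → ℝ, covar μ X Y = covar μ Y X := by
    intro X Y
    unfold covar
    exact integral_congr_ae (Filter.Eventually.of_forall fun ω => by ring)
  set V := Var μ D with hV
  set c := covar μ A D - R * covar μ C D with hc
  set K := Var μ A + R ^ 2 * Var μ C - 2 * R * covar μ A C with hK
  have hVne : V ≠ 0 := ne_of_gt hVarD
  have hVD : covar μ D D = V := rfl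
  have hfeq : ∀ α β : ℝ, f α β = K + V * (a * α - β * R) ^ 2 - 2 * c * (a * α - β * R) := by
    intro α β
    rw [hf α β, varB, covL A, covR C, covR D, covsymm D C, hVD]
    rw [hK, hc]
    show Var μ A + α ^ 2 * (a ^ 2 * V) - 2 * α * (a * covar μ A D) + R ^ 2 * Var μ C
      + β ^ 2 * R ^ 2 * V - 2 * β * R ^ 2 * covar μ C D - 2 * R * covar μ A C
      + 2 * α * R * (a * covar μ C D) + 2 * β * R * covar μ A D
      - 2 * α * β * R * (a * V) = _
    ring
  have hident : ∀ t : ℝ, V * (t - c / V) ^ 2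
      = (K + V * t ^ 2 - 2 * c * t) - (K + V * (c / V) ^ 2 - 2 * c * (c / V)) := by
    intro t
    field_simp
    ring
  have hmin : ∀ t : ℝ, K + V * (c / V) ^ 2 - 2 * c * (c / V) ≤ K + V * t ^ 2 - 2 * c * t := by
    intro t
    have h1 : 0 ≤ V * (t - c / V) ^ 2 := mul_nonneg hVarD.le (sq_nonneg _)
    rw [hident t] at h1
    linarith
  have key : ∀ t : ℝ,
      (K + V * t ^ 2 - 2 * c * t ≤ K + V * (c / V) ^ 2 - 2 * c * (c / V)) → t = c / V := by
    intro t ht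
    have h3 : V * (t - c / V) ^ 2 = 0 := by
      rw [hident t]
      linarith [hmin t]
    rcases mul_eq_zero.mp h3 with h | h
    · exact absurd h hVne
    · have := pow_eq_zero_iff (n := 2) (by norm_num) |>.mp h
      linarith
  have part2 : ∀ β : ℝ, ∀ α' β' : ℝ,
      f ((1 / a) * (c / V + β * R)) β ≤ f α' β' := by
    intro β α' β'
    rw [hfeq, hfeq]
    have e : a * ((1 / a) * (c / V + β * R)) - β * R = c / V := by
      field_simp
      ring
    rw [e]
    exact hmin _
  refine ⟨?_, part2, ?_⟩
  · intro α β
    constructor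
    · intro h
      apply key
      have h1 := h ((1 / a) * (c / V + 0 * R)) 0
      rw [hfeq, hfeq] at h1
      have e : a * ((1 / a) * (c / V + 0 * R)) - 0 * R = c / V := by
        field_simp
        ring
      rw [e] at h1
      exact h1
    · intro h α' β'
      rw [hfeq, hfeq, h]
      exact hmin _
  · apply Set.infinite_of_injective_forall_mem
      (f := fun β : ℝ => (((1 / a) * (c / V + β * R)), β))
    · intro β₁ β₂ h
      exact congrArg Prod.snd h
    · intro β
      exact part2 β
end
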